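/- The set F = {0, 1} ∪ {2^{−n} : n ∈ ℕ} ⊆ ℝ satisfies dim_A F = dim_LA F = 0, but F is not equi-homogeneous. -/

import Mathlib

open Set Metric Filter Bornology MeasureTheory
open scoped ENNReal NNReal

/-- `coverNumber F δ` : the minimum number of closed `δ`-balls with centres in
`F` needed to cover `F` (`∞` if there is no finite such cover). -/
noncomputable def coverNumber {X : Type*} [MetricSpace X] (F : Set X) (δ : ℝ) : ℝ≥0∞ :=
  ⨅ (t : Finset X) (_ : (t : Set X) ⊆ F) (_ : F ⊆ ⋃ x ∈ t, closedBall x δ),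
    (t.card : ℝ≥0∞)

/-- `F` is equi-homogeneous: for every `δ₀ > 0` there are `M ≥ 1` and
`c₁, c₂ > 0` with
`sup_{x∈F} N(B_δ(x) ∩ F, ρ) ≤ M inf_{x∈F} N(B_{c₁δ}(x) ∩ F, c₂ρ)`
for all `0 < ρ < δ ≤ δ₀`. -/
def EquiHomogeneous {X : Type*} [MetricSpace X] (F : Set X) : Prop :=
  ∀ δ₀ : ℝ, 0 < δ₀ → ∃ M c₁ c₂ : ℝ, 1 ≤ M ∧ 0 < c₁ ∧ 0 < c₂ ∧
    ∀ δ ρ : ℝ, 0 < ρ → ρ < δ → δ ≤ δ₀ →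
      (⨆ x ∈ F, coverNumber (closedBall x δ ∩ F) ρ) ≤
        ENNReal.ofReal M * (⨅ x ∈ F, coverNumber (closedBall x (c₁ * δ) ∩ F) (c₂ * ρ))

/-- The Assouad dimension of `F`. -/
noncomputable def assouadDim {X : Type*} [MetricSpace X] (F : Set X) : ℝ :=
  sInf {s : ℝ | 0 ≤ s ∧ ∀ δ₀ : ℝ, 0 < δ₀ → ∃ C : ℝ, 0 < C ∧
    ∀ x ∈ F, ∀ δ ρ : ℝ, 0 < ρ → ρ < δ → δ ≤ δ₀ →
      coverNumber (closedBall x δ ∩ F) ρ ≤ ENNReal.ofReal (C * (δ / ρ) ^ s)}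

/-- The lower Assouad dimension of `F`. -/
noncomputable def lowerAssouadDim {X : Type*} [MetricSpace X] (F : Set X) : ℝ :=
  sSup {s : ℝ | 0 ≤ s ∧ ∀ δ₀ : ℝ, 0 < δ₀ → ∃ C : ℝ, 0 < C ∧
    ∀ x ∈ F, ∀ δ ρ : ℝ, 0 < ρ → ρ < δ → δ ≤ δ₀ →
      ENNReal.ofReal (C * (δ / ρ) ^ s) ≤ coverNumber (closedBall x δ ∩ F) ρ}

/-! At scale ρ, the part of `B_δ(x) ∩ F` lying in `[0, ρ]` is covered by a single ball and each
remaining point `2⁻ⁿ > ρ` gets a ball of its own. These points lie in an interval `[L, L + 2δ]`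
with `L ≥ ρ`, so the geometric decay bounds their number by `1 + log₂ (3δ/ρ)`, which is
`O((δ/ρ)^s)` for every `s > 0`; hence `dim_A F = 0`. The isolated point `1` forces
`dim_LA F = 0` and also breaks equi-homogeneity: small balls around `1` meet `F` in one point,
while every ball around the accumulation point `0` meets `F` in infinitely many points, so its
covering numbers are unbounded as `ρ → 0`. -/

open Topology

section CoverNumber

variable {X : Type*} [MetricSpace X] {S T : Set X} {δ : ℝ}

lemma coverNumber_le_card (t : Finset X) (ht : (t : Set X) ⊆ S)
    (hcov : S ⊆ ⋃ x ∈ t, closedBall x δ) : coverNumber S δ ≤ t.card :=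
  iInf₂_le_of_le t ht (iInf_le _ hcov)

lemma coverNumber_finset_le_card (t : Finset X) (hδ : 0 ≤ δ) :
    coverNumber (t : Set X) δ ≤ t.card :=
  coverNumber_le_card t subset_rfl fun _ hx => mem_biUnion hx (mem_closedBall_self hδ)

lemma coverNumber_le_one_of_forall_dist_le (h : ∀ a ∈ S, ∀ b ∈ S, dist a b ≤ δ) :
    coverNumber S δ ≤ 1 := by
  rcases S.eq_empty_or_nonempty with rfl | ⟨a, ha⟩
  · exact (coverNumber_le_card (∅ : Finset X) (by simp) (by simp)).trans (by simp)
  · simpa using coverNumber_le_card {a} (by simpa using ha)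
      (fun b hb => by simpa using h b hb a ha)

lemma one_le_coverNumber (hS : S.Nonempty) : 1 ≤ coverNumber S δ := by
  refine le_iInf₂ fun t _ => le_iInf fun hcov => ?_
  obtain ⟨x, hx⟩ := hS
  obtain ⟨c, hc, -⟩ := mem_iUnion₂.mp (hcov hx)
  exact_mod_cast Finset.card_pos.mpr ⟨c, hc⟩

lemma coverNumber_union_le :
    coverNumber (S ∪ T) δ ≤ coverNumber S δ + coverNumber T δ := by
  classical
  simp only [coverNumber, ENNReal.iInf_add, ENNReal.add_iInf]
  refine le_iInf₂ fun t htT => le_iInf fun ht => le_iInf₂ fun s hsS => le_iInf fun hs => ?_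
  calc coverNumber (S ∪ T) δ ≤ (s ∪ t).card :=
        coverNumber_le_card (s ∪ t) (by rw [Finset.coe_union]; exact union_subset_union hsS htT)
          (by rw [Finset.set_biUnion_union]; exact union_subset_union hs ht)
    _ ≤ s.card + t.card := by exact_mod_cast Finset.card_union_le s t

lemma card_le_coverNumber_of_separated (s : Finset X) (hs : (s : Set X) ⊆ S)
    (hsep : ∀ a ∈ s, ∀ b ∈ s, a ≠ b → 2 * δ < dist a b) : (s.card : ℝ≥0∞) ≤ coverNumber S δ := by
  refine le_iInf₂ fun t _ => le_iInf fun hcov => ?_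
  refine Nat.cast_le.mpr (Finset.card_le_card_of_forall_subsingleton (fun a c => dist a c ≤ δ)
    (fun a ha => ?_) fun c _ a ha b hb => ?_)
  · simpa [dist_comm] using hcov (hs ha)
  · by_contra hab
    have := hsep a ha.1 b hb.1 hab
    linarith [dist_triangle_right a b c, ha.2, hb.2]

lemma Set.Infinite.exists_le_coverNumber (hS : S.Infinite) (K : ℕ) {ρ₀ : ℝ} (hρ₀ : 0 < ρ₀) :
    ∃ ρ, 0 < ρ ∧ ρ < ρ₀ ∧ (K : ℝ≥0∞) ≤ coverNumber S ρ := by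
  obtain ⟨s, hs, rfl⟩ := hS.exists_subset_card_eq K
  have hsmall : ∀ a ∈ s, ∀ b ∈ s, ∀ᶠ ρ in 𝓝[>] (0 : ℝ), a ≠ b → 2 * ρ < dist a b := by
    intro a _ b _
    by_cases hab : a = b
    · exact .of_forall fun _ h => absurd hab h
    · have : Tendsto (fun ρ : ℝ => 2 * ρ) (𝓝[>] 0) (𝓝 0) := by
        simpa using ((continuous_const_mul (2 : ℝ)).tendsto 0).mono_left nhdsWithin_le_nhds
      exact (this.eventually (gt_mem_nhds (dist_pos.mpr hab))).mono fun _ h _ => h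
  simp only [← Filter.eventually_all_finset] at hsmall
  obtain ⟨ρ, hsep, hρ, hρρ₀⟩ := (hsmall.and (Ioo_mem_nhdsGT hρ₀)).exists
  exact ⟨ρ, hρ, hρρ₀, card_le_coverNumber_of_separated s hs hsep⟩

end CoverNumber

section Dimensions

variable {X : Type*} [MetricSpace X] {F : Set X}

lemma assouadDim_eq_zero_of_forall_pos
    (h : ∀ s : ℝ, 0 < s → ∃ C : ℝ, 0 < C ∧ ∀ x ∈ F, ∀ δ ρ : ℝ, 0 < ρ → ρ < δ →
      coverNumber (closedBall x δ ∩ F) ρ ≤ ENNReal.ofReal (C * (δ / ρ) ^ s)) :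
    assouadDim F = 0 := by
  set S := {s : ℝ | 0 ≤ s ∧ ∀ δ₀ : ℝ, 0 < δ₀ → ∃ C : ℝ, 0 < C ∧
    ∀ x ∈ F, ∀ δ ρ : ℝ, 0 < ρ → ρ < δ → δ ≤ δ₀ →
      coverNumber (closedBall x δ ∩ F) ρ ≤ ENNReal.ofReal (C * (δ / ρ) ^ s)}
  have hpos : Ioi 0 ⊆ S := fun s hs => by
    obtain ⟨C, hC, hbound⟩ := h s hs
    exact ⟨le_of_lt hs, fun _ _ => ⟨C, hC, fun x hx δ ρ hρ hρδ _ => hbound x hx δ ρ hρ hρδ⟩⟩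
  have hS : S.Nonempty := ⟨1, hpos (mem_Ioi.mpr one_pos)⟩
  refine le_antisymm ?_ (le_csInf hS fun s hs => hs.1)
  calc sInf S ≤ sInf (Ioi (0 : ℝ)) := csInf_le_csInf ⟨0, fun s hs => hs.1⟩ nonempty_Ioi hpos
    _ = 0 := csInf_Ioi

lemma exists_one_lt_mul_rpow {C s : ℝ} (hC : 0 < C) (hs : 0 < s) :
    ∃ R > 1, 1 < C * R ^ s :=
  (((tendsto_rpow_atTop hs).const_mul_atTop hC).eventually_gt_atTop 1 |>.and
    (eventually_gt_atTop 1)).exists.imp fun _ h => ⟨h.2, h.1⟩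

lemma lowerAssouadDim_eq_zero_of_isolated {x₁ : X} (hx₁ : x₁ ∈ F) {r : ℝ} (hr : 0 < r)
    (hiso : closedBall x₁ r ∩ F ⊆ {x₁}) : lowerAssouadDim F = 0 := by
  set S := {s : ℝ | 0 ≤ s ∧ ∀ δ₀ : ℝ, 0 < δ₀ → ∃ C : ℝ, 0 < C ∧
    ∀ x ∈ F, ∀ δ ρ : ℝ, 0 < ρ → ρ < δ → δ ≤ δ₀ →
      ENNReal.ofReal (C * (δ / ρ) ^ s) ≤ coverNumber (closedBall x δ ∩ F) ρ}
  have hzero : (0 : ℝ) ∈ S := by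
    refine ⟨le_rfl, fun _ _ => ⟨1, one_pos, fun x hx δ ρ _ hρδ _ => ?_⟩⟩
    rw [Real.rpow_zero, mul_one, ENNReal.ofReal_one]
    exact one_le_coverNumber ⟨x, mem_closedBall_self (by linarith), hx⟩
  have hnonpos : ∀ s ∈ S, s ≤ 0 := by
    intro s ⟨_, hs⟩
    by_contra! hpos
    obtain ⟨C, hC, hlower⟩ := hs r hr
    obtain ⟨R, hR, hCR⟩ := exists_one_lt_mul_rpow hC hpos
    have hρ : 0 < r / R := div_pos hr (by linarith)
    have hsingle : coverNumber (closedBall x₁ r ∩ F) (r / R) ≤ 1 :=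
      coverNumber_le_one_of_forall_dist_le fun a ha b hb => by
        rw [hiso ha, hiso hb, dist_self]; exact hρ.le
    have := (hlower x₁ hx₁ r (r / R) hρ (div_lt_self hr hR) le_rfl).trans hsingle
    rw [div_div_cancel₀ hr.ne', ENNReal.ofReal_le_one] at this
    linarith
  exact IsGreatest.csSup_eq ⟨hzero, hnonpos⟩

lemma not_equiHomogeneous_of_isolated_of_infinite {x₀ x₁ : X} (hx₀ : x₀ ∈ F) (hx₁ : x₁ ∈ F)
    {r : ℝ} (hr : 0 < r) (hiso : closedBall x₁ r ∩ F ⊆ {x₁})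
    (hinf : ∀ δ > 0, (closedBall x₀ δ ∩ F).Infinite) : ¬ EquiHomogeneous F := by
  intro hF
  obtain ⟨M, c₁, c₂, _, hc₁, hc₂, hcompare⟩ := hF 1 one_pos
  set δ := min 1 (r / c₁)
  have hδ : 0 < δ := lt_min one_pos (div_pos hr hc₁)
  obtain ⟨ρ, hρ, hρδ, hmany⟩ := (hinf δ hδ).exists_le_coverNumber (⌊M⌋₊ + 1) hδ
  have hfew : coverNumber (closedBall x₁ (c₁ * δ) ∩ F) (c₂ * ρ) ≤ 1 := by
    have hsub : closedBall x₁ (c₁ * δ) ∩ F ⊆ {x₁} :=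
      (inter_subset_inter_left F (closedBall_subset_closedBall
        ((le_div_iff₀' hc₁).mp (min_le_right _ _)))).trans hiso
    refine coverNumber_le_one_of_forall_dist_le fun a ha b hb => ?_
    rw [hsub ha, hsub hb, dist_self]
    positivity
  have : ((⌊M⌋₊ + 1 : ℕ) : ℝ≥0∞) ≤ ENNReal.ofReal M :=
    calc ((⌊M⌋₊ + 1 : ℕ) : ℝ≥0∞) ≤ ⨆ x ∈ F, coverNumber (closedBall x δ ∩ F) ρ :=
          hmany.trans (le_iSup₂_of_le x₀ hx₀ le_rfl)
      _ ≤ ENNReal.ofReal M * ⨅ x ∈ F, coverNumber (closedBall x (c₁ * δ) ∩ F) (c₂ * ρ) :=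
          hcompare δ ρ hρ hρδ (min_le_left _ _)
      _ ≤ ENNReal.ofReal M * 1 := by gcongr; exact iInf₂_le_of_le x₁ hx₁ hfew
      _ = ENNReal.ofReal M := mul_one _
  rw [← ENNReal.ofReal_natCast, ENNReal.ofReal_le_ofReal_iff (by positivity)] at this
  push_cast at this
  linarith [Nat.lt_floor_add_one M]

end Dimensions

section GeometricCount

lemma Finset.two_pow_card_sub_one_le_of_forall_inv_two_pow_mem_Icc {S : Finset ℕ}
    (hS : S.Nonempty) {L K : ℝ} (hL : 0 < L)
    (h : ∀ n ∈ S, (2⁻¹ : ℝ) ^ n ∈ Set.Icc L (K * L)) :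
    (2 : ℝ) ^ (S.card - 1) ≤ K := by
  obtain ⟨-, hmin⟩ := h _ (S.min'_mem hS)
  obtain ⟨hmax, -⟩ := h _ (S.max'_mem hS)
  obtain ⟨k, hk⟩ := Nat.exists_eq_add_of_le (S.min'_le _ (S.max'_mem hS))
  have hcard : S.card - 1 ≤ k := by
    have := Finset.card_le_card (t := Finset.Icc (S.min' hS) (S.max' hS))
      fun n hn => Finset.mem_Icc.mpr ⟨S.min'_le n hn, S.le_max' n hn⟩
    rw [Nat.card_Icc] at this
    omega
  have hK : 0 ≤ K := by nlinarith [pow_pos (by norm_num : (0 : ℝ) < 2⁻¹) (S.min' hS)]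
  have hratio : (2 : ℝ) ^ k * (2⁻¹ : ℝ) ^ S.max' hS = (2⁻¹ : ℝ) ^ S.min' hS := by
    rw [hk, pow_add, mul_left_comm, ← mul_pow, mul_inv_cancel₀ two_ne_zero, one_pow, mul_one]
  have hKpow : (2 : ℝ) ^ k * (2⁻¹ : ℝ) ^ S.max' hS ≤ K * (2⁻¹ : ℝ) ^ S.max' hS := by
    rw [hratio]
    exact hmin.trans (mul_le_mul_of_nonneg_left hmax hK)
  calc (2 : ℝ) ^ (S.card - 1) ≤ 2 ^ k := pow_le_pow_right₀ (by norm_num) hcard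
    _ ≤ K := le_of_mul_le_mul_right hKpow (by positivity)

lemma natCast_le_two_pow_rpow_div {s : ℝ} (hs : 0 < s) (j : ℕ) :
    (j : ℝ) ≤ ((2 : ℝ) ^ j) ^ s / (2 ^ s - 1) := by
  have hgt : 1 < (2 : ℝ) ^ s := Real.one_lt_rpow (by norm_num) hs
  have bernoulli := one_add_mul_sub_le_pow (a := (2 : ℝ) ^ s) (by linarith) j
  rw [Real.rpow_pow_comm (by norm_num)] at bernoulli
  rw [le_div_iff₀ (by linarith)]
  linarith

lemma Finset.card_le_one_add_rpow_of_forall_inv_two_pow_mem_Icc {S : Finset ℕ} {L K s : ℝ}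
    (hL : 0 < L) (hK : 0 ≤ K) (hs : 0 < s) (h : ∀ n ∈ S, (2⁻¹ : ℝ) ^ n ∈ Set.Icc L (K * L)) :
    (S.card : ℝ) ≤ 1 + K ^ s / (2 ^ s - 1) := by
  have hden : 0 < (2 : ℝ) ^ s - 1 := by linarith [Real.one_lt_rpow (by norm_num : (1 : ℝ) < 2) hs]
  rcases S.eq_empty_or_nonempty with rfl | hS
  · simp only [Finset.card_empty, Nat.cast_zero]
    have := div_nonneg (Real.rpow_nonneg hK s) hden.le
    linarith
  · have hpow := S.two_pow_card_sub_one_le_of_forall_inv_two_pow_mem_Icc hS hL h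
    calc (S.card : ℝ) = 1 + ((S.card - 1 : ℕ) : ℝ) := by
          rw [Nat.cast_sub (Finset.card_pos.mpr hS)]; ring
      _ ≤ 1 + ((2 : ℝ) ^ (S.card - 1)) ^ s / (2 ^ s - 1) := by
          gcongr; exact natCast_le_two_pow_rpow_div hs _
      _ ≤ 1 + K ^ s / (2 ^ s - 1) := by gcongr

end GeometricCount

section Dyadic

def dyadicSet : Set ℝ := insert 0 (range fun n : ℕ => (2⁻¹ : ℝ) ^ n)

lemma insert_zero_insert_one_eq_dyadicSet :
    insert (0 : ℝ) (insert 1 {x : ℝ | ∃ n : ℕ, 1 ≤ n ∧ x = (2 : ℝ) ^ (-(n : ℝ))}) =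
      dyadicSet := by
  have hpow (n : ℕ) : (2 : ℝ) ^ (-(n : ℝ)) = (2⁻¹ : ℝ) ^ n := by
    rw [Real.rpow_neg zero_le_two, Real.rpow_natCast, inv_pow]
  congr 1
  ext x
  simp only [mem_insert_iff, mem_ofPred_eq, mem_range, hpow]
  constructor
  · rintro (rfl | ⟨n, -, rfl⟩)
    exacts [⟨0, pow_zero _⟩, ⟨n, rfl⟩]
  · rintro ⟨_ | n, rfl⟩
    exacts [.inl (pow_zero _), .inr ⟨n + 1, by omega, rfl⟩]

lemma nonneg_of_mem_dyadicSet {y : ℝ} (hy : y ∈ dyadicSet) : 0 ≤ y := by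
  rcases hy with rfl | ⟨n, rfl⟩
  exacts [le_rfl, by positivity]

lemma closedBall_one_inter_dyadicSet_subset : closedBall (1 : ℝ) 4⁻¹ ∩ dyadicSet ⊆ {1} := by
  rintro y ⟨hy, rfl | ⟨_ | n, rfl⟩⟩
  · norm_num [Real.dist_eq] at hy
  · exact pow_zero _
  · have : (2⁻¹ : ℝ) ^ (n + 1) ≤ 2⁻¹ := pow_le_of_le_one (by norm_num) (by norm_num) n.succ_ne_zero
    rw [mem_closedBall, Real.dist_eq, abs_le] at hy
    linarith [hy.1]

lemma closedBall_zero_inter_dyadicSet_infinite {δ : ℝ} (hδ : 0 < δ) :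
    (closedBall 0 δ ∩ dyadicSet).Infinite := by
  obtain ⟨N, hN⟩ := exists_pow_lt_of_lt_one hδ (by norm_num : (2⁻¹ : ℝ) < 1)
  refine infinite_of_injective_forall_mem (f := fun n : ℕ => (2⁻¹ : ℝ) ^ (n + N))
    ((pow_right_injective₀ (by norm_num) (by norm_num)).comp (add_left_injective N))
    fun n => ⟨?_, .inr ⟨n + N, rfl⟩⟩
  rw [mem_closedBall, dist_zero_right, Real.norm_eq_abs, abs_of_pos (by positivity)]
  exact (pow_le_pow_of_le_one (by norm_num) (by norm_num) (by omega)).trans hN.le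

lemma card_le_of_forall_inv_two_pow_mem_closedBall {A : Finset ℕ} {x δ ρ s : ℝ} (hρ : 0 < ρ)
    (hρδ : ρ ≤ δ) (hs : 0 < s)
    (hA : ∀ n ∈ A, ρ < (2⁻¹ : ℝ) ^ n ∧ (2⁻¹ : ℝ) ^ n ∈ closedBall x δ) :
    (A.card : ℝ) ≤ 1 + (3 * (δ / ρ)) ^ s / (2 ^ s - 1) := by
  have hratio : 1 ≤ δ / ρ := (one_le_div hρ).mpr hρδ
  refine Finset.card_le_one_add_rpow_of_forall_inv_two_pow_mem_Icc (L := max ρ (x - δ))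
    (lt_max_of_lt_left hρ) (by positivity) hs fun n hn => ?_
  obtain ⟨hρn, hnx⟩ := hA n hn
  rw [mem_closedBall, Real.dist_eq, abs_le] at hnx
  have hδL : δ ≤ δ / ρ * max ρ (x - δ) := by
    rw [div_mul_eq_mul_div, le_div_iff₀ hρ]
    exact mul_le_mul_of_nonneg_left (le_max_left _ _) (hρ.le.trans hρδ)
  have hL : max ρ (x - δ) ≤ δ / ρ * max ρ (x - δ) :=
    le_mul_of_one_le_left (hρ.le.trans (le_max_left _ _)) hratio
  refine ⟨max_le hρn.le (by linarith), ?_⟩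
  linarith [le_max_right ρ (x - δ)]

lemma coverNumber_closedBall_inter_dyadicSet_le (x : ℝ) {δ ρ s : ℝ} (hρ : 0 < ρ) (hρδ : ρ ≤ δ)
    (hs : 0 < s) :
    coverNumber (closedBall x δ ∩ dyadicSet) ρ ≤
      ENNReal.ofReal ((2 + 3 ^ s / (2 ^ s - 1)) * (δ / ρ) ^ s) := by
  classical
  set G := closedBall x δ ∩ dyadicSet
  obtain ⟨N, hN⟩ := exists_pow_lt_of_lt_one hρ (by norm_num : (2⁻¹ : ℝ) < 1)
  set A := (Finset.range N).filter fun n => ρ < (2⁻¹ : ℝ) ^ n ∧ (2⁻¹ : ℝ) ^ n ∈ closedBall x δ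
  have hsmall : coverNumber (G ∩ Iic ρ) ρ ≤ 1 := by
    refine coverNumber_le_one_of_forall_dist_le fun a ha b hb => ?_
    have := nonneg_of_mem_dyadicSet ha.1.2
    have := nonneg_of_mem_dyadicSet hb.1.2
    rw [Real.dist_eq, abs_le]
    constructor <;> linarith [ha.2.out, hb.2.out]
  have hlarge : G ∩ Ioi ρ = (A.image fun n => (2⁻¹ : ℝ) ^ n : Finset ℝ) := by
    ext y
    simp only [G, A, Finset.coe_image, Finset.coe_filter, Finset.mem_range, mem_image,
      mem_inter_iff, mem_Ioi, mem_ofPred_eq]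
    constructor
    · rintro ⟨⟨hyx, rfl | ⟨n, rfl⟩⟩, hρy⟩
      · exact absurd hρy (not_lt.mpr hρ.le)
      · refine ⟨n, ⟨?_, hρy, hyx⟩, rfl⟩
        by_contra! hNn
        linarith [pow_le_pow_of_le_one (by norm_num : (0 : ℝ) ≤ 2⁻¹) (by norm_num) hNn]
    · rintro ⟨n, ⟨-, hρn, hnx⟩, rfl⟩
      exact ⟨⟨hnx, .inr ⟨n, rfl⟩⟩, hρn⟩
  have hratio : 1 ≤ δ / ρ := (one_le_div hρ).mpr hρδ
  have hA := card_le_of_forall_inv_two_pow_mem_closedBall (A := A) hρ hρδ hs fun n hn =>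
    (Finset.mem_filter.mp hn).2
  have hT : 1 ≤ (δ / ρ) ^ s := Real.one_le_rpow hratio hs.le
  have hden : 0 < (2 : ℝ) ^ s - 1 := by linarith [Real.one_lt_rpow (by norm_num : (1 : ℝ) < 2) hs]
  calc coverNumber G ρ = coverNumber (G ∩ Iic ρ ∪ G ∩ Ioi ρ) ρ := by
        rw [← inter_union_distrib_left, Iic_union_Ioi, inter_univ]
    _ ≤ 1 + A.card := by
        refine coverNumber_union_le.trans (add_le_add hsmall ?_)
        rw [hlarge]
        exact (coverNumber_finset_le_card _ hρ.le).trans (by exact_mod_cast Finset.card_image_le)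
    _ = ENNReal.ofReal (1 + A.card) := by
        rw [ENNReal.ofReal_add zero_le_one (Nat.cast_nonneg _), ENNReal.ofReal_one,
          ENNReal.ofReal_natCast]
    _ ≤ ENNReal.ofReal ((2 + 3 ^ s / (2 ^ s - 1)) * (δ / ρ) ^ s) := by
        refine ENNReal.ofReal_le_ofReal ?_
        rw [Real.mul_rpow (by norm_num) (zero_le_one.trans hratio)] at hA
        have : 0 ≤ (3 : ℝ) ^ s / (2 ^ s - 1) := div_nonneg (by positivity) hden.le
        calc 1 + (A.card : ℝ) ≤ 2 + 3 ^ s / (2 ^ s - 1) * (δ / ρ) ^ s := by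
              rw [div_mul_eq_mul_div]; linarith
          _ ≤ (2 + 3 ^ s / (2 ^ s - 1)) * (δ / ρ) ^ s := by nlinarith

end Dyadic

/-- The set `F = {0,1} ∪ {2^{-n} : n ∈ ℕ}` satisfies
`dim_A F = dim_LA F = 0` but is not equi-homogeneous. -/
theorem equal_dims_not_equiHomogeneous (F : Set ℝ)
    (hF : F = insert (0 : ℝ)
      (insert 1 {x : ℝ | ∃ n : ℕ, 1 ≤ n ∧ x = (2 : ℝ) ^ (-(n : ℝ))})) :
    assouadDim F = 0 ∧ lowerAssouadDim F = 0 ∧ ¬ EquiHomogeneous F := by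
  rw [hF, insert_zero_insert_one_eq_dyadicSet]
  have hone : (1 : ℝ) ∈ dyadicSet := .inr ⟨0, pow_zero _⟩
  refine ⟨assouadDim_eq_zero_of_forall_pos fun s hs => ⟨_, ?_, fun x _ δ ρ hρ hρδ =>
      coverNumber_closedBall_inter_dyadicSet_le x hρ hρδ.le hs⟩,
    lowerAssouadDim_eq_zero_of_isolated hone (by norm_num) closedBall_one_inter_dyadicSet_subset,
    not_equiHomogeneous_of_isolated_of_infinite (mem_insert 0 _) hone (by norm_num)
      closedBall_one_inter_dyadicSet_subset fun _ => closedBall_zero_inter_dyadicSet_infinite⟩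
  exact add_pos_of_pos_of_nonneg two_pos
    (div_nonneg (by positivity) (sub_nonneg.mpr (Real.one_le_rpow one_le_two hs.le)))
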